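/- Let G₁₁ = b₁a* and G₂₁ = b₂a* be rank-one 2×2 matrices with b₁, b₂ ∈ ℂ² and the same a ∈ ℂ² (case a of the 2×2 NVD theorem). Then for every ε > 0 there exists a nonzero Gaussian integer vector s ∈ (ℤ[i])² with |a* s|² < ε, and for any such s the matrix X = [G₁₁ s, G₂₁ s] ∈ ℂ^{2×2} satisfies σ_max(X)² ≤ (‖b₁‖² + ‖b₂‖²)·ε. -/

import Mathlib

open Matrix

/-- The spectral norm (largest singular value) of a complex matrix, as the operator
norm of the induced map between Euclidean spaces. -/
noncomputable def specNorm {m n : ℕ} (M : Matrix (Fin m) (Fin n) ℂ) : ℝ :=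
  ‖LinearMap.toContinuousLinearMap (Matrix.toEuclideanLin M)‖


lemma cs_step (p r m q t L : ℝ) (hp : 0 ≤ p) (hr : 0 ≤ r) (hm : 0 ≤ m) (hq : 0 ≤ q)
    (ht : 0 ≤ t) (hL : 0 ≤ L) (h : L ≤ p * m * q + r * m * t) :
    L ^ 2 ≤ (p ^ 2 + r ^ 2) * (q ^ 2 + t ^ 2) * m ^ 2 := by
  nlinarith [mul_nonneg (sq_nonneg m) (sq_nonneg (p * t - r * q)),
    mul_nonneg (mul_nonneg hp hm) hq, mul_nonneg (mul_nonneg hr hm) ht]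

lemma cs_norm (x y c u0 u1 : ℂ) :
    ‖x * c * u0 + y * c * u1‖ ^ 2 ≤ (‖x‖ ^ 2 + ‖y‖ ^ 2) * (‖u0‖ ^ 2 + ‖u1‖ ^ 2) * ‖c‖ ^ 2 := by
  have h := norm_add_le (x * c * u0) (y * c * u1)
  rw [norm_mul, norm_mul, norm_mul, norm_mul] at h
  exact cs_step _ _ _ _ _ _ (norm_nonneg x) (norm_nonneg y) (norm_nonneg c)
    (norm_nonneg u0) (norm_nonneg u1) (norm_nonneg _) h

lemma specNorm_sq_le (a b1 b2 s : Fin 2 → ℂ) (ε : ℝ) (hε : 0 < ε)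
    (hc : ‖∑ l, (starRingEnd ℂ) (a l) * s l‖ ^ 2 < ε) :
    specNorm (Matrix.of fun (i j : Fin 2) =>
        if j = 0 then
          (Matrix.of fun (i' j' : Fin 2) => b1 i' * (starRingEnd ℂ) (a j')).mulVec s i
        else
          (Matrix.of fun (i' j' : Fin 2) => b2 i' * (starRingEnd ℂ) (a j')).mulVec s i) ^ 2
      ≤ ((∑ i, ‖b1 i‖ ^ 2) + ∑ i, ‖b2 i‖ ^ 2) * ε := by
  set c : ℂ := ∑ l, (starRingEnd ℂ) (a l) * s l with hcdef
  set S : ℝ := (∑ i, ‖b1 i‖ ^ 2) + ∑ i, ‖b2 i‖ ^ 2 with hSdef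
  set X : Matrix (Fin 2) (Fin 2) ℂ := Matrix.of fun (i j : Fin 2) =>
      if j = 0 then
        (Matrix.of fun (i' j' : Fin 2) => b1 i' * (starRingEnd ℂ) (a j')).mulVec s i
      else
        (Matrix.of fun (i' j' : Fin 2) => b2 i' * (starRingEnd ℂ) (a j')).mulVec s i with hXdef
  have hS0 : 0 ≤ S := by
    rw [hSdef]
    positivity
  have hXij : ∀ i j : Fin 2, X i j = (if j = 0 then b1 i else b2 i) * c := by
    intro i j
    by_cases hj : j = 0 <;>
      simp only [hXdef, Matrix.of_apply, hj, if_true, if_false, Matrix.mulVec, dotProduct,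
        Fin.sum_univ_two, hcdef] <;> ring
  have hXv : ∀ v : EuclideanSpace ℂ (Fin 2),
      ‖(LinearMap.toContinuousLinearMap (Matrix.toEuclideanLin X)) v‖ ≤
        Real.sqrt (S * ε) * ‖v‖ := by
    intro v
    have hx : (LinearMap.toContinuousLinearMap (Matrix.toEuclideanLin X)) v
        = (WithLp.equiv 2 (Fin 2 → ℂ)).symm (X *ᵥ (WithLp.equiv 2 (Fin 2 → ℂ)) v) := rfl
    have key : ∀ w : EuclideanSpace ℂ (Fin 2), ‖w‖ = Real.sqrt (‖w 0‖ ^ 2 + ‖w 1‖ ^ 2) := by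
      intro w
      rw [EuclideanSpace.norm_eq, Fin.sum_univ_two]
    rw [hx, key, key]
    have happ : ∀ i : Fin 2,
        ((WithLp.equiv 2 (Fin 2 → ℂ)).symm (X *ᵥ (WithLp.equiv 2 (Fin 2 → ℂ)) v)) i
          = b1 i * c * v 0 + b2 i * c * v 1 := by
      intro i
      simp only [WithLp.equiv_symm_apply, PiLp.toLp_apply, WithLp.equiv_apply, Matrix.mulVec, dotProduct,
        Fin.sum_univ_two, hXij]
      norm_num
    rw [happ 0, happ 1, ← Real.sqrt_mul (mul_nonneg hS0 hε.le)]
    apply Real.sqrt_le_sqrt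
    have e0 := cs_norm (b1 0) (b2 0) c (v 0) (v 1)
    have e1 := cs_norm (b1 1) (b2 1) c (v 0) (v 1)
    have hv0 : (0 : ℝ) ≤ ‖v 0‖ ^ 2 + ‖v 1‖ ^ 2 := by positivity
    have hSsum : S = (‖b1 0‖ ^ 2 + ‖b2 0‖ ^ 2) + (‖b1 1‖ ^ 2 + ‖b2 1‖ ^ 2) := by
      rw [hSdef, Fin.sum_univ_two, Fin.sum_univ_two]
      ring
    have hmul := mul_le_mul_of_nonneg_left hc.le (mul_nonneg hS0 hv0)
    rw [hSsum] at hmul ⊢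
    nlinarith [e0, e1, hmul]
  have hop : specNorm X ≤ Real.sqrt (S * ε) :=
    ContinuousLinearMap.opNorm_le_bound
      (LinearMap.toContinuousLinearMap (Matrix.toEuclideanLin X)) (Real.sqrt_nonneg _) hXv
  have h2 : Real.sqrt (S * ε) ^ 2 = S * ε := Real.sq_sqrt (mul_nonneg hS0 hε.le)
  have h1 : specNorm X ^ 2 ≤ Real.sqrt (S * ε) ^ 2 := by
    have := pow_le_pow_left₀ (norm_nonneg (LinearMap.toContinuousLinearMap
      (Matrix.toEuclideanLin X))) hop 2
    exact this
  rw [h2] at h1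
  exact h1


lemma floor_eq_abs_lt {u v : ℝ} (h : ⌊u⌋ = ⌊v⌋) : |u - v| < 1 := by
  have h1 := Int.floor_le u
  have h2 := Int.lt_floor_add_one u
  have h3 := Int.floor_le v
  have h4 := Int.lt_floor_add_one v
  rw [h] at h1 h2
  rw [abs_lt]; constructor <;> linarith

lemma key_frac (z w : ℝ) (N : ℕ) (hN : 0 < N)
    (h : ⌊(N : ℝ) * Int.fract z⌋ = ⌊(N : ℝ) * Int.fract w⌋) :
    |(z - w) - ((⌊z⌋ : ℝ) - (⌊w⌋ : ℝ))| < 1 / N := by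
  have h1 : |(N : ℝ) * Int.fract z - (N : ℝ) * Int.fract w| < 1 := floor_eq_abs_lt h
  have hNpos : (0 : ℝ) < N := by positivity
  have heq : (z - w) - ((⌊z⌋ : ℝ) - (⌊w⌋ : ℝ)) =
      ((N : ℝ) * Int.fract z - (N : ℝ) * Int.fract w) / N := by
    have hz : Int.fract z = z - ⌊z⌋ := rfl
    have hw : Int.fract w = w - ⌊w⌋ := rfl
    rw [hz, hw, eq_div_iff hNpos.ne']
    ring
  rw [heq, abs_div, abs_of_pos hNpos, div_lt_div_iff₀ hNpos hNpos]
  nlinarith [abs_nonneg ((N : ℝ) * Int.fract z - (N : ℝ) * Int.fract w)]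

lemma dirichlet2 (x y : ℝ) (N : ℕ) (hN : 0 < N) :
    ∃ K j j' : ℤ, K ≠ 0 ∧ |K * x - j| < 1 / N ∧ |K * y - j'| < 1 / N := by
  have hmaps : ∀ k ∈ Finset.range (N * N + 1),
      ((⌊(N : ℝ) * Int.fract (k * x)⌋, ⌊(N : ℝ) * Int.fract (k * y)⌋) : ℤ × ℤ) ∈
        Finset.Ico (0 : ℤ) N ×ˢ Finset.Ico (0 : ℤ) N := by
    intro k _
    have hbound : ∀ z : ℝ, ⌊(N : ℝ) * Int.fract z⌋ ∈ Finset.Ico (0 : ℤ) N := by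
      intro z
      rw [Finset.mem_Ico]
      refine ⟨Int.floor_nonneg.mpr (mul_nonneg (by positivity) (Int.fract_nonneg z)), ?_⟩
      refine Int.floor_lt.mpr ?_
      push_cast
      calc (N : ℝ) * Int.fract z < N * 1 :=
            mul_lt_mul_of_pos_left (Int.fract_lt_one z) (by positivity)
        _ = N := mul_one _
    exact Finset.mem_product.mpr ⟨hbound _, hbound _⟩
  have hcard : (Finset.Ico (0 : ℤ) N ×ˢ Finset.Ico (0 : ℤ) N).card <
      (Finset.range (N * N + 1)).card := by
    simp [Int.card_Ico]
  obtain ⟨k, hk, k', hk', hne, heq⟩ :=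
    Finset.exists_ne_map_eq_of_card_lt_of_maps_to hcard hmaps
  rw [Prod.mk.injEq] at heq
  refine ⟨(k : ℤ) - k', ⌊(k : ℝ) * x⌋ - ⌊(k' : ℝ) * x⌋, ⌊(k : ℝ) * y⌋ - ⌊(k' : ℝ) * y⌋,
    sub_ne_zero.mpr (by exact_mod_cast hne), ?_, ?_⟩
  · have := key_frac (k * x) (k' * x) N hN heq.1
    push_cast
    convert this using 2
    ring
  · have := key_frac (k * y) (k' * y) N hN heq.2
    push_cast
    convert this using 2
    ring

lemma exists_small_gauss (a : Fin 2 → ℂ) (ha : a ≠ 0) (ε : ℝ) (hε : 0 < ε) :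
    ∃ s : Fin 2 → ℂ, s ≠ 0 ∧
      (∀ i, ∃ za zb : ℤ, s i = (za : ℂ) + (zb : ℂ) * Complex.I) ∧
      ‖∑ l, (starRingEnd ℂ) (a l) * s l‖ ^ 2 < ε := by
  by_cases h0 : a 0 = 0
  · refine ⟨![1, 0], ?_, ?_, ?_⟩
    · intro h
      have := congrFun h 0
      simp at this
    · intro i
      fin_cases i
      · exact ⟨1, 0, by simp⟩
      · exact ⟨0, 0, by simp⟩
    · rw [Fin.sum_univ_two]
      simp [h0, hε]
  · -- a 0 ≠ 0
    set t : ℂ := (starRingEnd ℂ) (a 1) / (starRingEnd ℂ) (a 0) with ht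
    have hc0 : (starRingEnd ℂ) (a 0) ≠ 0 := by
      simpa using h0
    obtain ⟨N, hNgt⟩ := exists_nat_gt (max 1 (Real.sqrt (2 * ‖a 0‖ ^ 2 / ε)))
    have hN1 : (1 : ℝ) < N := lt_of_le_of_lt (le_max_left _ _) hNgt
    have hNpos : 0 < N := by exact_mod_cast lt_trans one_pos hN1
    have hNsq : 2 * ‖a 0‖ ^ 2 / ε < (N : ℝ) ^ 2 := by
      have h1 : Real.sqrt (2 * ‖a 0‖ ^ 2 / ε) < N :=
        lt_of_le_of_lt (le_max_right _ _) hNgt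
      have h2 : 0 ≤ 2 * ‖a 0‖ ^ 2 / ε := by positivity
      nlinarith [Real.sq_sqrt h2, Real.sqrt_nonneg (2 * ‖a 0‖ ^ 2 / ε)]
    obtain ⟨K, j, j', hK, hx, hy⟩ := dirichlet2 t.re t.im N hNpos
    refine ⟨![-(j : ℂ) + (-j' : ℂ) * Complex.I, (K : ℂ)], ?_, ?_, ?_⟩
    · intro h
      have := congrFun h 1
      simp at this
      exact hK (by exact_mod_cast this)
    · intro i
      fin_cases i
      · exact ⟨-j, -j', by norm_num⟩
      · exact ⟨K, 0, by norm_num⟩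
    · set w : ℂ := (-(j : ℂ) + (-j' : ℂ) * Complex.I) + (K : ℂ) * t with hw
      have hsum : ∑ l, (starRingEnd ℂ) (a l) *
          (![-(j : ℂ) + (-j' : ℂ) * Complex.I, (K : ℂ)] l) = (starRingEnd ℂ) (a 0) * w := by
        rw [Fin.sum_univ_two]
        simp only [Matrix.cons_val_zero, Matrix.cons_val_one, Matrix.head_cons, hw, ht]
        field_simp
      rw [hsum]
      have hwre : w.re = (K : ℝ) * t.re - j := by simp [hw]; ring
      have hwim : w.im = (K : ℝ) * t.im - j' := by simp [hw]; ring
      have hw2 : ‖w‖ ^ 2 = ((K : ℝ) * t.re - j) ^ 2 + ((K : ℝ) * t.im - j') ^ 2 := by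
        rw [← hwre, ← hwim]
        rw [Complex.sq_norm, Complex.normSq_apply]
        ring
      have hw2lt : ‖w‖ ^ 2 < 2 / (N : ℝ) ^ 2 := by
        rw [hw2]
        have hx' := abs_lt.mp hx
        have hy' := abs_lt.mp hy
        have hNr : (0 : ℝ) < N := by positivity
        have e1 : ((K : ℝ) * t.re - j) ^ 2 < (1 / N) ^ 2 := by nlinarith
        have e2 : ((K : ℝ) * t.im - j') ^ 2 < (1 / N) ^ 2 := by nlinarith
        have : (1 / (N:ℝ)) ^ 2 = 1 / (N:ℝ) ^ 2 := by ring
        rw [this] at e1 e2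
        rw [div_eq_mul_inv, two_mul]
        rw [div_eq_mul_inv, one_mul] at e1 e2
        linarith
      rw [norm_mul, mul_pow, RCLike.norm_conj]
      have hA : (0 : ℝ) < ‖a 0‖ ^ 2 := pow_pos (norm_pos_iff.mpr h0) 2
      have hWnn : (0 : ℝ) ≤ ‖w‖ ^ 2 := by positivity
      have hfin : 2 * ‖a 0‖ ^ 2 < ε * (N : ℝ) ^ 2 := by
        rw [div_lt_iff₀ hε] at hNsq
        linarith
      have hN2 : (0 : ℝ) < (N : ℝ) ^ 2 := by positivity
      have hwN : ‖w‖ ^ 2 * (N : ℝ) ^ 2 < 2 := by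
        rw [lt_div_iff₀ hN2] at hw2lt
        linarith
      nlinarith [mul_lt_mul_of_pos_left hwN hA]

/-- Case a of the 2×2 NVD theorem: with `G₁₁ = b₁a*` and `G₂₁ = b₂a*` (same `a ≠ 0`),
for every `ε > 0` there is a nonzero Gaussian integer vector `s ∈ (ℤ[i])²` with
`|a*s|² < ε`, and for any such `s` the matrix `X = [G₁₁s, G₂₁s]` satisfies
`σ_max(X)² ≤ (‖b₁‖² + ‖b₂‖²) ε`. -/
theorem stmt16 (a b1 b2 : Fin 2 → ℂ) (ha : a ≠ 0) :
    (∀ ε : ℝ, 0 < ε → ∃ s : Fin 2 → ℂ, s ≠ 0 ∧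
      (∀ i, ∃ za zb : ℤ, s i = (za : ℂ) + (zb : ℂ) * Complex.I) ∧
      ‖∑ l, (starRingEnd ℂ) (a l) * s l‖ ^ 2 < ε) ∧
    (∀ ε : ℝ, 0 < ε → ∀ s : Fin 2 → ℂ, s ≠ 0 →
      (∀ i, ∃ za zb : ℤ, s i = (za : ℂ) + (zb : ℂ) * Complex.I) →
      ‖∑ l, (starRingEnd ℂ) (a l) * s l‖ ^ 2 < ε →
      specNorm (Matrix.of fun (i j : Fin 2) =>
          if j = 0 then
            (Matrix.of fun (i' j' : Fin 2) => b1 i' * (starRingEnd ℂ) (a j')).mulVec s i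
          else
            (Matrix.of fun (i' j' : Fin 2) => b2 i' * (starRingEnd ℂ) (a j')).mulVec s i) ^ 2
        ≤ ((∑ i, ‖b1 i‖ ^ 2) + ∑ i, ‖b2 i‖ ^ 2) * ε) := by
  constructor
  · intro ε hε
    exact exists_small_gauss a ha ε hε
  · intro ε hε s hs hgauss hc
    exact specNorm_sq_le a b1 b2 s ε hε hc
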